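/- Let α ∈ (0,1) and β ∈ (−1/2, −α). The function f(t) = t^β belongs to L²(0,T), but there exists no continuous function w on [0,T] such that the Caputo derivative D^α w(t) = f(t) holds for t ∈ (0,T]; indeed any solution must satisfy w(t) − w(0) = c_{α,β} t^{α+β} with c_{α,β} = Γ(β+1)/Γ(α+β+1), which is unbounded as t → 0⁺ since α + β < 0. -/

import Mathlib

/-
Let `g` be a continuous extension of `w - w 0` from `[0, T]`, and `I^a` the Riemann–Liouville
integral. The equation says that `I^(1-α) g` has derivative `t^β` on `(0, T)`; since it also tends
to `0` at `0⁺`, it equals `t^(β+1)/(β+1)`. Applying `I^α` and the semigroup law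
`I^α I^(1-α) = I^1` (Fubini on the triangle `τ < t` and the Beta integral) gives
`∫₀ˣ g = Γ(β+1)/Γ(α+β+2) x^(α+β+1)`, and differentiating gives the formula for `w t - w 0`.
As `α + β < 0`, its right-hand side tends to `+∞` at `0⁺`, contradicting continuity of `w` at `0`.
-/

open MeasureTheory Set intervalIntegral

/-- Riemann–Liouville fractional integral of order `α` with base point `0`. -/
noncomputable def riemannLiouville (α : ℝ) (f : ℝ → ℝ) (t : ℝ) : ℝ :=
  (1 / Real.Gamma α) * ∫ τ in (0:ℝ)..t, (t - τ) ^ (α - 1) * f τ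

/-- Caputo fractional derivative of order `α ∈ (0,1)`. -/
noncomputable def caputoD (α : ℝ) (w : ℝ → ℝ) (t : ℝ) : ℝ :=
  deriv (fun s => riemannLiouville (1 - α) (fun τ => w τ - w 0) s) t

open Real Function Filter Topology

theorem integral_rpow_mul_sub_rpow {s u x : ℝ} (hs : 0 < s) (hu : 0 < u) (hx : 0 < x) :
    ∫ t in 0..x, t ^ (s - 1) * (x - t) ^ (u - 1)
      = Gamma s * Gamma u / Gamma (s + u) * x ^ (s + u - 1) := by
  have h := Complex.betaIntegral_scaled s u hx
  rw [Complex.betaIntegral_eq_Gamma_mul_div _ _ (by simpa) (by simpa)] at h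
  have hcast : ∫ t in 0..x, (t : ℂ) ^ ((s : ℂ) - 1) * ((x : ℂ) - t) ^ ((u : ℂ) - 1)
      = ((∫ t in 0..x, t ^ (s - 1) * (x - t) ^ (u - 1) : ℝ) : ℂ) := by
    rw [← intervalIntegral.integral_ofReal]
    refine intervalIntegral.integral_congr fun t ht => ?_
    rw [uIcc_of_le hx.le] at ht
    push_cast [Complex.ofReal_cpow ht.1, Complex.ofReal_cpow (sub_nonneg.2 ht.2)]
    rfl
  rw [hcast] at h
  rw [mul_comm]
  exact_mod_cast (by push_cast [Complex.ofReal_cpow hx.le, ← Complex.Gamma_ofReal]; exact h :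
    ((∫ t in 0..x, t ^ (s - 1) * (x - t) ^ (u - 1) : ℝ) : ℂ)
      = ((x ^ (s + u - 1) * (Gamma s * Gamma u / Gamma (s + u)) : ℝ) : ℂ))

theorem integral_sub_rpow_mul_sub_rpow {a b τ x : ℝ} (ha : 0 < a) (hb : 0 < b) (hτx : τ < x) :
    ∫ t in τ..x, (x - t) ^ (a - 1) * (t - τ) ^ (b - 1)
      = Gamma a * Gamma b / Gamma (a + b) * (x - τ) ^ (a + b - 1) := by
  have h := integral_rpow_mul_sub_rpow hb ha (sub_pos.2 hτx)
  rw [add_comm b, mul_comm (Gamma b)] at h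
  rw [← h, ← sub_self τ, ← intervalIntegral.integral_comp_sub_right]
  exact intervalIntegral.integral_congr fun t _ => by ring_nf

theorem intervalIntegrable_sub_rpow_mul_sub_rpow {a b τ x : ℝ} (ha : 0 < a) (hb : 0 < b)
    (hτx : τ ≤ x) :
    IntervalIntegrable (fun t => (x - t) ^ (a - 1) * (t - τ) ^ (b - 1)) volume τ x := by
  rcases hτx.lt_or_eq with hτx | rfl
  -- a non-integrable function has integral `0`, whereas this integral is a positive Beta value
  · refine intervalIntegrable_of_integral_ne_zero ?_
    rw [integral_sub_rpow_mul_sub_rpow ha hb hτx]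
    have := Gamma_pos_of_pos ha
    have := Gamma_pos_of_pos hb
    have := Gamma_pos_of_pos (add_pos ha hb)
    have := rpow_pos_of_pos (sub_pos.2 hτx) (a + b - 1)
    positivity
  · exact IntervalIntegrable.refl

theorem tendsto_rpow_nhdsGT_zero_of_pos {r : ℝ} (hr : 0 < r) :
    Tendsto (fun t : ℝ => t ^ r) (𝓝[>] 0) (𝓝 0) := by
  simpa [zero_rpow hr.ne'] using
    (continuousAt_rpow_const 0 r (Or.inr hr.le)).tendsto.mono_left nhdsWithin_le_nhds

theorem intervalIntegrable_sub_rpow {r : ℝ} (hr : -1 < r) (x : ℝ) :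
    IntervalIntegrable (fun τ => (x - τ) ^ r) volume 0 x := by
  simpa using (intervalIntegrable_rpow' (a := x - 0) (b := x - x) hr).comp_sub_left x

theorem integral_sub_rpow {r : ℝ} (hr : -1 < r) (x : ℝ) :
    ∫ τ in 0..x, (x - τ) ^ r = x ^ (r + 1) / (r + 1) := by
  rw [intervalIntegral.integral_comp_sub_left (fun u => u ^ r) x, sub_self, sub_zero,
    integral_rpow (Or.inl hr), zero_rpow (by linarith), sub_zero]

theorem Ioi_inter_Ioc_of_le {α : Type*} [LinearOrder α] {a b c : α} (h : a ≤ b) :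
    Ioi b ∩ Ioc a c = Ioc b c := by
  rw [inter_comm, Ioc_inter_Ioi, sup_eq_right.2 h]

theorem Iio_inter_Ioc_of_le {α : Type*} [LinearOrder α] {a b c : α} (h : b ≤ c) :
    Iio b ∩ Ioc a c = Ioo a b := by
  ext
  exact ⟨fun ⟨hb, ha, _⟩ => ⟨ha, hb⟩, fun ⟨ha, hb⟩ => ⟨hb, ha, hb.le.trans h⟩⟩

section BelowDiagonal

def belowDiagonal : Set (ℝ × ℝ) := {p | p.2 < p.1}

theorem measurableSet_belowDiagonal : MeasurableSet belowDiagonal :=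
  measurableSet_lt measurable_snd measurable_fst

variable {F : ℝ → ℝ → ℝ} {x : ℝ}

theorem indicator_belowDiagonal_eq_indicator_Iio {t : ℝ} :
    (fun τ => belowDiagonal.indicator (uncurry F) (t, τ)) = (Iio t).indicator (F t) := by
  ext τ; simp [belowDiagonal, Set.indicator_apply]

theorem indicator_belowDiagonal_eq_indicator_Ioi {τ : ℝ} :
    (fun t => belowDiagonal.indicator (uncurry F) (t, τ)) = (Ioi τ).indicator (F · τ) := by
  ext t; simp [belowDiagonal, Set.indicator_apply]

theorem setIntegral_Ioc_indicator_belowDiagonal_snd {t : ℝ} (ht : t ∈ Ioc 0 x) :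
    ∫ τ in Ioc 0 x, belowDiagonal.indicator (uncurry F) (t, τ) = ∫ τ in 0..t, F t τ := by
  rw [indicator_belowDiagonal_eq_indicator_Iio, MeasureTheory.integral_indicator measurableSet_Iio,
    Measure.restrict_restrict measurableSet_Iio, Iio_inter_Ioc_of_le ht.2, integral_of_le ht.1.le,
    integral_Ioc_eq_integral_Ioo]

theorem setIntegral_Ioc_indicator_belowDiagonal_fst {τ : ℝ} (hτ : τ ∈ Ioc 0 x) :
    ∫ t in Ioc 0 x, belowDiagonal.indicator (uncurry F) (t, τ) = ∫ t in τ..x, F t τ := by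
  rw [indicator_belowDiagonal_eq_indicator_Ioi,
    MeasureTheory.integral_indicator measurableSet_Ioi, Measure.restrict_restrict measurableSet_Ioi,
    Ioi_inter_Ioc_of_le hτ.1.le, integral_of_le hτ.2]

theorem integrableOn_Ioc_indicator_belowDiagonal_fst {τ : ℝ} (hτ : τ ∈ Ioc 0 x)
    (h : IntervalIntegrable (F · τ) volume τ x) :
    IntegrableOn (fun t => belowDiagonal.indicator (uncurry F) (t, τ)) (Ioc 0 x) := by
  rw [indicator_belowDiagonal_eq_indicator_Ioi, IntegrableOn,
    integrable_indicator_iff measurableSet_Ioi, IntegrableOn,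
    Measure.restrict_restrict measurableSet_Ioi, Ioi_inter_Ioc_of_le hτ.1.le]
  exact h.1

theorem integral_integral_swap_belowDiagonal (hx : 0 ≤ x)
    (hF : Integrable (belowDiagonal.indicator (uncurry F))
      ((volume.restrict (Ioc 0 x)).prod (volume.restrict (Ioc 0 x)))) :
    ∫ t in 0..x, ∫ τ in 0..t, F t τ = ∫ τ in 0..x, ∫ t in τ..x, F t τ := by
  calc ∫ t in 0..x, ∫ τ in 0..t, F t τ
        = ∫ t in Ioc 0 x, ∫ τ in Ioc 0 x, belowDiagonal.indicator (uncurry F) (t, τ) := by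
        rw [integral_of_le hx]
        exact setIntegral_congr_fun measurableSet_Ioc fun t ht =>
          (setIntegral_Ioc_indicator_belowDiagonal_snd ht).symm
    _ = ∫ τ in Ioc 0 x, ∫ t in Ioc 0 x, belowDiagonal.indicator (uncurry F) (t, τ) :=
        integral_integral_swap hF
    _ = ∫ τ in 0..x, ∫ t in τ..x, F t τ := by
        rw [integral_of_le hx]
        exact setIntegral_congr_fun measurableSet_Ioc
          fun τ hτ => setIntegral_Ioc_indicator_belowDiagonal_fst hτ

theorem integrable_indicator_belowDiagonal_sub_rpow_mul {a b x : ℝ} (ha : 0 < a) (hb : 0 < b)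
    {f : ℝ → ℝ} (hf : Continuous f) :
    Integrable (belowDiagonal.indicator
        (uncurry fun t τ => (x - t) ^ (a - 1) * ((t - τ) ^ (b - 1) * f τ)))
      ((volume.restrict (Ioc 0 x)).prod (volume.restrict (Ioc 0 x))) := by
  set K := fun t τ => (x - t) ^ (a - 1) * ((t - τ) ^ (b - 1) * f τ)
  have hK : Measurable (uncurry K) := by
    have := hf.measurable
    fun_prop
  rw [integrable_prod_iff' ((hK.indicator measurableSet_belowDiagonal).aestronglyMeasurable)]
  constructor
  · filter_upwards [ae_restrict_mem measurableSet_Ioc] with τ hτ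
    refine integrableOn_Ioc_indicator_belowDiagonal_fst hτ ?_
    simpa only [K, mul_assoc] using
      (intervalIntegrable_sub_rpow_mul_sub_rpow ha hb hτ.2).mul_const (f τ)
  · have hnorm : ∀ τ ∈ Ioo 0 x, ∫ t in Ioc 0 x, ‖belowDiagonal.indicator (uncurry K) (t, τ)‖
        = Gamma a * Gamma b / Gamma (a + b) * ((x - τ) ^ (a + b - 1) * |f τ|) := by
      intro τ hτ
      simp_rw [norm_indicator_eq_indicator_norm]
      refine (setIntegral_Ioc_indicator_belowDiagonal_fst (F := fun t τ => ‖K t τ‖)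
        (Ioo_subset_Ioc_self hτ)).trans ?_
      calc ∫ t in τ..x, ‖K t τ‖ = ∫ t in τ..x, (x - t) ^ (a - 1) * (t - τ) ^ (b - 1) * |f τ| := by
            refine intervalIntegral.integral_congr fun t ht => ?_
            rw [uIcc_of_le hτ.2.le] at ht
            simp only [K, norm_mul, Real.norm_eq_abs, mul_assoc,
              abs_of_nonneg (rpow_nonneg (sub_nonneg.2 ht.2) _),
              abs_of_nonneg (rpow_nonneg (sub_nonneg.2 ht.1) _)]
        _ = _ := by
            rw [intervalIntegral.integral_mul_const, integral_sub_rpow_mul_sub_rpow ha hb hτ.2,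
              mul_assoc]
    have hint : IntegrableOn
        (fun τ => Gamma a * Gamma b / Gamma (a + b) * ((x - τ) ^ (a + b - 1) * |f τ|)) (Ioc 0 x) :=
      (((intervalIntegrable_sub_rpow (by linarith) x).mul_continuousOn
        (continuous_abs.comp hf).continuousOn).const_mul _).1
    show IntegrableOn _ (Ioc 0 x)
    rw [integrableOn_Ioc_iff_integrableOn_Ioo] at hint ⊢
    exact hint.congr_fun (fun τ hτ => (hnorm τ hτ).symm) measurableSet_Ioo

end BelowDiagonal

section RiemannLiouville

variable {a b x : ℝ} {f g : ℝ → ℝ}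

theorem riemannLiouville_congr (hx : 0 ≤ x) (h : EqOn f g (Ioc 0 x)) :
    riemannLiouville a f x = riemannLiouville a g x := by
  simp only [riemannLiouville, integral_of_le hx]
  rw [setIntegral_congr_fun measurableSet_Ioc fun τ hτ => by rw [h hτ]]

theorem riemannLiouville_const_mul (c : ℝ) :
    riemannLiouville a (fun t => c * f t) x = c * riemannLiouville a f x := by
  simp only [riemannLiouville, mul_left_comm _ c, intervalIntegral.integral_const_mul]

theorem riemannLiouville_one : riemannLiouville 1 f x = ∫ τ in 0..x, f τ := by
  simp [riemannLiouville]

theorem riemannLiouville_rpow (ha : 0 < a) (hb : 0 < b) (hx : 0 < x) :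
    riemannLiouville a (fun t => t ^ (b - 1)) x = Gamma b / Gamma (a + b) * x ^ (a + b - 1) := by
  simp only [riemannLiouville]
  rw [intervalIntegral.integral_congr (g := fun t => t ^ (b - 1) * (x - t) ^ (a - 1))
    fun _ _ => mul_comm _ _, integral_rpow_mul_sub_rpow hb ha hx, add_comm b]
  field_simp

theorem abs_riemannLiouville_le (ha : 0 < a) (hx : 0 ≤ x) {M : ℝ}
    (hM : ∀ τ ∈ Ioc 0 x, |f τ| ≤ M) :
    |riemannLiouville a f x| ≤ M * x ^ a / Gamma (a + 1) := by
  have hΓ := Gamma_pos_of_pos ha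
  have hint : ‖∫ τ in 0..x, (x - τ) ^ (a - 1) * f τ‖ ≤ ∫ τ in 0..x, (x - τ) ^ (a - 1) * M := by
    refine intervalIntegral.norm_integral_le_of_norm_le hx (ae_of_all _ fun τ hτ => ?_)
      ((intervalIntegrable_sub_rpow (by linarith) x).mul_const M)
    rw [norm_mul, Real.norm_of_nonneg (rpow_nonneg (sub_nonneg.2 hτ.2) _)]
    exact mul_le_mul_of_nonneg_left (hM τ hτ) (rpow_nonneg (sub_nonneg.2 hτ.2) _)
  rw [intervalIntegral.integral_mul_const, integral_sub_rpow (by linarith) x,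
    sub_add_cancel, Real.norm_eq_abs] at hint
  rw [riemannLiouville, abs_mul, abs_of_pos (one_div_pos.2 hΓ), Gamma_add_one ha.ne']
  calc 1 / Gamma a * |∫ τ in 0..x, (x - τ) ^ (a - 1) * f τ|
      ≤ 1 / Gamma a * (x ^ a / a * M) := by gcongr
    _ = M * x ^ a / (a * Gamma a) := by field_simp

theorem tendsto_riemannLiouville_nhdsGT_zero (ha : 0 < a) (hf : Continuous f) :
    Tendsto (riemannLiouville a f) (𝓝[>] 0) (𝓝 0) := by
  obtain ⟨M, hM⟩ := (isCompact_Icc (a := (0 : ℝ)) (b := 1)).exists_bound_of_continuousOn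
    hf.continuousOn
  have hpow : Tendsto (fun t : ℝ => M * t ^ a / Gamma (a + 1)) (𝓝[>] 0) (𝓝 0) := by
    simpa using ((tendsto_rpow_nhdsGT_zero_of_pos ha).const_mul M).div_const (Gamma (a + 1))
  refine squeeze_zero_norm' ?_ hpow
  filter_upwards [Ioc_mem_nhdsGT (zero_lt_one' ℝ)] with t ht
  exact abs_riemannLiouville_le ha ht.1.le fun τ hτ => hM τ ⟨hτ.1.le, hτ.2.trans ht.2⟩

theorem riemannLiouville_riemannLiouville (ha : 0 < a) (hb : 0 < b) (hf : Continuous f)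
    (hx : 0 < x) :
    riemannLiouville a (riemannLiouville b f) x = riemannLiouville (a + b) f x := by
  have hswap := integral_integral_swap_belowDiagonal hx.le
    (integrable_indicator_belowDiagonal_sub_rpow_mul (x := x) ha hb hf)
  have hinner : ∀ τ ∈ Ioo 0 x,
      ∫ t in τ..x, (x - t) ^ (a - 1) * ((t - τ) ^ (b - 1) * f τ)
        = Gamma a * Gamma b / Gamma (a + b) * ((x - τ) ^ (a + b - 1) * f τ) := by
    intro τ hτ
    simp only [← mul_assoc]
    rw [intervalIntegral.integral_mul_const, integral_sub_rpow_mul_sub_rpow ha hb hτ.2]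
  calc riemannLiouville a (riemannLiouville b f) x
      = 1 / Gamma a * (1 / Gamma b) *
          ∫ t in 0..x, ∫ τ in 0..t, (x - t) ^ (a - 1) * ((t - τ) ^ (b - 1) * f τ) := by
        simp only [riemannLiouville, intervalIntegral.integral_const_mul,
          mul_left_comm _ (1 / Gamma b)]
        ring
    _ = 1 / Gamma a * (1 / Gamma b) *
          ∫ τ in 0..x, Gamma a * Gamma b / Gamma (a + b) * ((x - τ) ^ (a + b - 1) * f τ) := by
        rw [hswap, integral_of_le hx.le, integral_of_le hx.le, integral_Ioc_eq_integral_Ioo,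
          integral_Ioc_eq_integral_Ioo, setIntegral_congr_fun measurableSet_Ioo hinner]
    _ = riemannLiouville (a + b) f x := by
        rw [riemannLiouville, intervalIntegral.integral_const_mul]
        field_simp

end RiemannLiouville

theorem eqOn_Ioo_of_hasDerivAt_of_tendsto_nhdsGT_zero {F G F' : ℝ → ℝ} {T : ℝ}
    (hF : ∀ t ∈ Ioo 0 T, HasDerivAt F (F' t) t) (hG : ∀ t ∈ Ioo 0 T, HasDerivAt G (F' t) t)
    (hF0 : Tendsto F (𝓝[>] 0) (𝓝 0)) (hG0 : Tendsto G (𝓝[>] 0) (𝓝 0)) :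
    EqOn F G (Ioo 0 T) := by
  obtain ⟨c, hc⟩ := isOpen_Ioo.exists_eq_add_of_deriv_eq isPreconnected_Ioo
    (fun t ht => (hF t ht).differentiableAt.differentiableWithinAt)
    (fun t ht => (hG t ht).differentiableAt.differentiableWithinAt)
    (fun t ht => (hF t ht).deriv.trans (hG t ht).deriv.symm)
  rcases le_or_gt T 0 with hT | hT
  · intro t ht; linarith [ht.1, ht.2]
  have hFc : Tendsto F (𝓝[>] 0) (𝓝 c) := by
    refine (zero_add c ▸ hG0.add_const c).congr' ?_
    filter_upwards [Ioo_mem_nhdsGT hT] with t ht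
    exact (hc ht).symm
  obtain rfl : c = 0 := tendsto_nhds_unique hFc hF0
  simpa using hc

theorem eqOn_rpow_of_hasDerivAt_riemannLiouville {T α β : ℝ} (hα : α ∈ Ioo 0 1) (hβ : -1 < β)
    {g : ℝ → ℝ} (hg : Continuous g)
    (hF : ∀ t ∈ Ioo 0 T, HasDerivAt (riemannLiouville (1 - α) g) (t ^ β) t) :
    EqOn g (fun t => Gamma (β + 1) / Gamma (α + β + 1) * t ^ (α + β)) (Ioo 0 T) := by
  have hβ1 : 0 < β + 1 := by linarith
  have hαβ1 : 0 < α + β + 1 := by linarith [hα.1]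
  have hFeq : EqOn (riemannLiouville (1 - α) g) (fun t => (β + 1)⁻¹ * t ^ (β + 1)) (Ioo 0 T) := by
    refine eqOn_Ioo_of_hasDerivAt_of_tendsto_nhdsGT_zero hF (fun t ht => ?_)
      (tendsto_riemannLiouville_nhdsGT_zero (by linarith [hα.2]) hg)
      (by simpa using (tendsto_rpow_nhdsGT_zero_of_pos hβ1).const_mul (β + 1)⁻¹)
    have := (hasDerivAt_rpow_const (p := β + 1) (Or.inl ht.1.ne')).const_mul (β + 1)⁻¹
    rwa [add_sub_cancel_right, inv_mul_cancel_left₀ hβ1.ne'] at this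
  have hint : ∀ x ∈ Ioo 0 T,
      ∫ τ in 0..x, g τ = Gamma (β + 1) / Gamma (α + β + 2) * x ^ (α + β + 1) := by
    intro x hx
    calc ∫ τ in 0..x, g τ = riemannLiouville α (riemannLiouville (1 - α) g) x := by
          rw [riemannLiouville_riemannLiouville hα.1 (by linarith [hα.2]) hg hx.1,
            add_sub_cancel, riemannLiouville_one]
      _ = riemannLiouville α (fun t => (β + 1)⁻¹ * t ^ ((β + 2) - 1)) x :=
          riemannLiouville_congr hx.1.le fun t ht => by
            rw [hFeq ⟨ht.1, ht.2.trans_lt hx.2⟩]; ring_nf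
      _ = Gamma (β + 1) / Gamma (α + β + 2) * x ^ (α + β + 1) := by
          rw [riemannLiouville_const_mul, riemannLiouville_rpow hα.1 (by linarith) hx.1,
            show α + (β + 2) = α + β + 2 by ring, show α + β + 2 - 1 = α + β + 1 by ring,
            show β + 2 = (β + 1) + 1 by ring, Gamma_add_one hβ1.ne']
          field_simp
  intro x hx
  have hlhs : HasDerivAt (fun y => ∫ τ in 0..y, g τ) (g x) x :=
    (hg.integral_hasStrictDerivAt 0 x).hasDerivAt
  have hrhs := (hasDerivAt_rpow_const (p := α + β + 1) (Or.inl hx.1.ne')).const_mul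
    (Gamma (β + 1) / Gamma (α + β + 2))
  have hev : (fun y => ∫ τ in 0..y, g τ) =ᶠ[𝓝 x]
      fun y => Gamma (β + 1) / Gamma (α + β + 2) * y ^ (α + β + 1) := by
    filter_upwards [isOpen_Ioo.mem_nhds hx] with y hy using hint y hy
  rw [hlhs.unique (hrhs.congr_of_eventuallyEq hev), add_sub_cancel_right,
    show α + β + 2 = (α + β + 1) + 1 by ring, Gamma_add_one hαβ1.ne']
  field_simp

theorem sub_eq_of_caputoD_eq_rpow {T α β : ℝ} (hα : α ∈ Ioo 0 1) (hβ : -1 < β) {w : ℝ → ℝ}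
    (hw : ContinuousOn w (Icc 0 T)) (hD : ∀ t ∈ Ioo 0 T, caputoD α w t = t ^ β) :
    ∀ t ∈ Ioc 0 T, w t - w 0 = Gamma (β + 1) / Gamma (α + β + 1) * t ^ (α + β) := by
  intro t ht
  have hT : 0 < T := ht.1.trans_le ht.2
  set g : ℝ → ℝ := fun τ => w (projIcc 0 T hT.le τ) - w 0
  have hg : Continuous g :=
    (hw.comp_continuous (continuous_subtype_val.comp continuous_projIcc)
      fun τ => (projIcc 0 T hT.le τ).2).sub continuous_const
  have hgw : EqOn g (fun τ => w τ - w 0) (Icc 0 T) := fun τ hτ => by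
    simp only [g, projIcc_of_mem hT.le hτ]
  have hF : ∀ s ∈ Ioo 0 T, HasDerivAt (riemannLiouville (1 - α) g) (s ^ β) s := by
    intro s hs
    have hev : riemannLiouville (1 - α) (fun τ => w τ - w 0) =ᶠ[𝓝 s]
        riemannLiouville (1 - α) g := by
      filter_upwards [isOpen_Ioo.mem_nhds hs] with r hr
      exact riemannLiouville_congr hr.1.le fun τ hτ => (hgw ⟨hτ.1.le, hτ.2.trans hr.2.le⟩).symm
    have hderiv : deriv (riemannLiouville (1 - α) g) s = s ^ β := hev.deriv_eq ▸ hD s hs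
    rw [← hderiv]
    exact (differentiableAt_of_deriv_ne_zero (hderiv ▸ (rpow_pos_of_pos hs.1 β).ne')).hasDerivAt
  have hcont : ContinuousOn (fun s => Gamma (β + 1) / Gamma (α + β + 1) * s ^ (α + β))
      (Ioc 0 T) := fun s hs =>
    ((continuousAt_rpow_const s _ (Or.inl hs.1.ne')).const_mul _).continuousWithinAt
  have hclosure : Ioc 0 T ⊆ closure (Ioo 0 T) := by
    rw [closure_Ioo hT.ne]
    exact Ioc_subset_Icc_self
  refine (hgw ⟨ht.1.le, ht.2⟩).symm.trans ?_
  exact (eqOn_rpow_of_hasDerivAt_riemannLiouville hα hβ hg hF).of_subset_closure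
    hg.continuousOn hcont Ioo_subset_Ioc_self hclosure ht

theorem memLp_two_rpow_Ioc {β : ℝ} (hβ : -1 / 2 < β) (T : ℝ) :
    MemLp (fun t : ℝ => t ^ β) 2 (volume.restrict (Ioc 0 T)) := by
  have hmeas : AEStronglyMeasurable (fun t : ℝ => t ^ β) (volume.restrict (Ioc 0 T)) :=
    ContinuousOn.aestronglyMeasurable (fun t ht =>
      (continuousAt_rpow_const t β (Or.inl ht.1.ne')).continuousWithinAt) measurableSet_Ioc
  rw [memLp_two_iff_integrable_sq hmeas]
  refine IntegrableOn.congr_fun (intervalIntegrable_rpow' (by linarith : -1 < β * 2)).1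
    (fun t ht => ?_) measurableSet_Ioc
  rw [rpow_mul ht.1.le]
  norm_num

theorem no_continuous_solution (T α β : ℝ) (hT : 0 < T)
    (hα : α ∈ Ioo (0:ℝ) 1) (hβ : β ∈ Ioo (-(1:ℝ)/2) (-α)) :
    MemLp (fun t : ℝ => t ^ β) 2 (volume.restrict (Ioc 0 T)) ∧
    (¬ ∃ w : ℝ → ℝ, ContinuousOn w (Icc 0 T) ∧
        ∀ t ∈ Ioc (0:ℝ) T, caputoD α w t = t ^ β) ∧
    (∀ w : ℝ → ℝ, ContinuousOn w (Icc 0 T) →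
      (∀ t ∈ Ioc (0:ℝ) T, caputoD α w t = t ^ β) →
      ∀ t ∈ Ioc (0:ℝ) T,
        w t - w 0 = Real.Gamma (β + 1) / Real.Gamma (α + β + 1) * t ^ (α + β)) := by
  obtain ⟨hβl, hβu⟩ := hβ
  have formula (w : ℝ → ℝ) (hw : ContinuousOn w (Icc 0 T))
      (hD : ∀ t ∈ Ioc (0:ℝ) T, caputoD α w t = t ^ β) :=
    sub_eq_of_caputoD_eq_rpow hα (by linarith) hw fun t ht => hD t (Ioo_subset_Ioc_self ht)
  refine ⟨memLp_two_rpow_Ioc hβl T, fun ⟨w, hw, hD⟩ => ?_, formula⟩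
  have hIoc : Ioc 0 T ∈ 𝓝[>] (0 : ℝ) := Ioc_mem_nhdsGT hT
  have hbounded : Tendsto (fun t => w t - w 0) (𝓝[>] 0) (𝓝 0) := by
    have := ((hw 0 ⟨le_rfl, hT.le⟩).tendsto.sub_const (w 0)).mono_left
      (nhdsWithin_le_of_mem (mem_of_superset hIoc Ioc_subset_Icc_self))
    rwa [sub_self] at this
  have hc : 0 < Gamma (β + 1) / Gamma (α + β + 1) :=
    div_pos (Gamma_pos_of_pos (by linarith)) (Gamma_pos_of_pos (by linarith [hα.1]))
  have hunbounded : Tendsto (fun t => w t - w 0) (𝓝[>] 0) atTop :=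
    ((tendsto_rpow_neg_nhdsGT_zero (by linarith)).const_mul_atTop hc).congr'
      (eventually_of_mem hIoc fun t ht => (formula w hw hD t ht).symm)
  exact not_tendsto_nhds_of_tendsto_atTop hunbounded 0 hbounded
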